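/- arXiv:2506.12622 — 5 statements merged into one kernel-verified Lean document; each statement's English description precedes it below -/
import Mathlib

section
/- The distributionally robust soft Bellman operator T_δ^π, defined in dual form by (T_δ^π Q)(s,a) = E[r(s,a)] + γ · sup_{β≥0} { -β log( E_{s'~p⁰_{s,a}}[exp(-V_Q(s')/β)] ) - βδ } where V_Q(s) = E_{a~π(·|s)}[Q(s,a) - α log π(a|s)], is a γ-contraction in the sup norm: for all bounded Q1, Q2, ‖T_δ^π Q1 - T_δ^π Q2‖_∞ ≤ γ ‖Q1 - Q2‖_∞. -/
open Real

/-- positivity of the partition sum -/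
lemma auxSumPos {S : Type*} [Fintype S] (p : S → ℝ) (hp : ∀ s, 0 ≤ p s)
    (hp1 : ∑ s, p s = 1) (g : S → ℝ) : 0 < ∑ s, p s * Real.exp (g s) := by
  have hex : ∃ s, 0 < p s := by
    by_contra h
    push_neg at h
    have : ∑ s, p s ≤ 0 := Finset.sum_nonpos fun s _ => h s
    linarith
  obtain ⟨s0, hs0⟩ := hex
  exact Finset.sum_pos' (fun s _ => mul_nonneg (hp s) (Real.exp_pos _).le)
    ⟨s0, Finset.mem_univ s0, mul_pos hs0 (Real.exp_pos _)⟩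

/-- one-sided Lipschitz bound for the soft-min (log-sum-exp) term -/
lemma auxLog {S : Type*} [Fintype S] (p : S → ℝ) (hp : ∀ s, 0 ≤ p s)
    (hp1 : ∑ s, p s = 1) (V1 V2 : S → ℝ) (M : ℝ) (hV : ∀ s, V1 s ≤ V2 s + M)
    {β : ℝ} (hβ : 0 < β) :
    -β * Real.log (∑ s, p s * Real.exp (-(V1 s) / β)) ≤
      -β * Real.log (∑ s, p s * Real.exp (-(V2 s) / β)) + M := by
  set S1 := ∑ s, p s * Real.exp (-(V1 s) / β) with hS1
  set S2 := ∑ s, p s * Real.exp (-(V2 s) / β) with hS2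
  have hS1pos : 0 < S1 := auxSumPos p hp hp1 _
  have hS2pos : 0 < S2 := auxSumPos p hp hp1 _
  have hle : S2 ≤ Real.exp (M / β) * S1 := by
    rw [hS2, hS1, Finset.mul_sum]
    refine Finset.sum_le_sum fun s _ => ?_
    rw [← mul_assoc, mul_comm (Real.exp (M / β)) (p s), mul_assoc]
    refine mul_le_mul_of_nonneg_left ?_ (hp s)
    rw [← Real.exp_add]
    apply Real.exp_le_exp.2
    have := hV s
    rw [← add_div]
    have h2 : -(V2 s) ≤ M + -(V1 s) := by linarith
    gcongr
  have hlog : Real.log S2 ≤ M / β + Real.log S1 := by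
    calc Real.log S2 ≤ Real.log (Real.exp (M / β) * S1) :=
          Real.log_le_log hS2pos hle
      _ = M / β + Real.log S1 := by
          rw [Real.log_mul (Real.exp_ne_zero _) hS1pos.ne', Real.log_exp]
  have hmul : β * Real.log S2 ≤ M + β * Real.log S1 := by
    have := mul_le_mul_of_nonneg_left hlog hβ.le
    rw [mul_add, mul_div_cancel₀ _ hβ.ne'] at this
    linarith
  linarith

/-- The distributionally robust soft Bellman operator (in dual form)
is a γ-contraction in the sup norm. -/
theorem stmt2 {S A : Type*} [Fintype S] [Fintype A] [Nonempty S] [Nonempty A]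
    (pol : S → A → ℝ) (hπpos : ∀ s a, 0 < pol s a) (hπ1 : ∀ s, ∑ a, pol s a = 1)
    (p0 : S → A → S → ℝ) (hp0 : ∀ s a s', 0 ≤ p0 s a s')
    (hp01 : ∀ s a, ∑ s', p0 s a s' = 1)
    (r : S → A → ℝ) (δ α γ : ℝ) (hδ : 0 < δ) (hα : 0 ≤ α)
    (hγ0 : 0 ≤ γ) (hγ1 : γ < 1)
    -- the soft state value associated with a Q-function
    (Vof : (S × A → ℝ) → S → ℝ)
    (hVof : ∀ Q s, Vof Q s = ∑ a, pol s a * (Q (s, a) - α * Real.log (pol s a)))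
    -- the dual inner objective, interpreted at β = 0 as the essential infimum
    (F : (S × A → ℝ) → S → A → ℝ → ℝ)
    (hF0 : ∀ Q s a, F Q s a 0 = sInf {x | ∃ s', 0 < p0 s a s' ∧ x = Vof Q s'})
    (hFpos : ∀ Q s a, ∀ β > (0 : ℝ), F Q s a β =
      -β * Real.log (∑ s', p0 s a s' * Real.exp (-(Vof Q s') / β)) - β * δ)
    -- the distributionally robust soft Bellman operator in dual form
    (T : (S × A → ℝ) → S × A → ℝ)
    (hT : ∀ Q s a, T Q (s, a) = r s a + γ * (⨆ β : {β : ℝ // 0 ≤ β}, F Q s a β))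
    (Q1 Q2 : S × A → ℝ) :
    (⨆ sa : S × A, |T Q1 sa - T Q2 sa|) ≤ γ * ⨆ sa : S × A, |Q1 sa - Q2 sa| := by
  haveI : Nonempty {β : ℝ // 0 ≤ β} := ⟨⟨0, le_rfl⟩⟩
  set M := ⨆ sa : S × A, |Q1 sa - Q2 sa| with hM
  have hMbdd : BddAbove (Set.range fun sa : S × A => |Q1 sa - Q2 sa|) :=
    Set.Finite.bddAbove (Set.finite_range _)
  have hMle : ∀ sa : S × A, |Q1 sa - Q2 sa| ≤ M := fun sa => le_ciSup hMbdd sa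
  -- the value functions are within M of each other
  have hVdiff : ∀ s, |Vof Q1 s - Vof Q2 s| ≤ M := by
    intro s
    rw [hVof, hVof, ← Finset.sum_sub_distrib]
    have heq : ∀ a : A, pol s a * (Q1 (s, a) - α * Real.log (pol s a)) -
        pol s a * (Q2 (s, a) - α * Real.log (pol s a)) =
        pol s a * (Q1 (s, a) - Q2 (s, a)) := fun a => by ring
    calc |∑ a, (pol s a * (Q1 (s, a) - α * Real.log (pol s a)) -
            pol s a * (Q2 (s, a) - α * Real.log (pol s a)))|
        ≤ ∑ a, |pol s a * (Q1 (s, a) - α * Real.log (pol s a)) -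
            pol s a * (Q2 (s, a) - α * Real.log (pol s a))| :=
          Finset.abs_sum_le_sum_abs _ _
      _ = ∑ a, pol s a * |Q1 (s, a) - Q2 (s, a)| := by
          refine Finset.sum_congr rfl fun a _ => ?_
          rw [heq a, abs_mul, abs_of_pos (hπpos s a)]
      _ ≤ ∑ a, pol s a * M :=
          Finset.sum_le_sum fun a _ =>
            mul_le_mul_of_nonneg_left (hMle (s, a)) (hπpos s a).le
      _ = M := by rw [← Finset.sum_mul, hπ1, one_mul]
  have hV12 : ∀ s, Vof Q1 s ≤ Vof Q2 s + M := fun s => by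
    have := abs_le.1 (hVdiff s); linarith [this.2]
  have hV21 : ∀ s, Vof Q2 s ≤ Vof Q1 s + M := fun s => by
    have := abs_le.1 (hVdiff s); linarith [this.1]
  -- the support set of p0 s a is nonempty
  have hsupp : ∀ s a, ∃ s', 0 < p0 s a s' := by
    intro s a
    by_contra h
    push_neg at h
    have : ∑ s', p0 s a s' ≤ 0 := Finset.sum_nonpos fun s' _ => h s'
    linarith [hp01 s a]
  -- one-sided Lipschitz bound for F, uniformly in β ≥ 0
  have key : ∀ (Qa Qb : S × A → ℝ), (∀ s, Vof Qa s ≤ Vof Qb s + M) →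
      ∀ s a (β : ℝ), 0 ≤ β → F Qa s a β ≤ F Qb s a β + M := by
    intro Qa Qb hab s a β hβ
    rcases eq_or_lt_of_le hβ with h0 | hpos
    · -- β = 0 : essential infimum case
      subst h0
      rw [hF0, hF0]
      set Sa := {x | ∃ s', 0 < p0 s a s' ∧ x = Vof Qa s'} with hSa
      set Sb := {x | ∃ s', 0 < p0 s a s' ∧ x = Vof Qb s'} with hSb
      have hSbne : Sb.Nonempty := by
        obtain ⟨s', hs'⟩ := hsupp s a
        exact ⟨Vof Qb s', s', hs', rfl⟩
      have hSabdd : BddBelow Sa := by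
        refine (Set.finite_range (Vof Qa)).subset ?_ |>.bddBelow
        rintro x ⟨s', _, rfl⟩
        exact ⟨s', rfl⟩
      rw [← sub_le_iff_le_add]
      refine le_csInf hSbne ?_
      rintro x ⟨s', hs', rfl⟩
      have h1 : sInf Sa ≤ Vof Qa s' := csInf_le hSabdd ⟨s', hs', rfl⟩
      have h2 := hab s'
      linarith
    · -- β > 0 : log-sum-exp case
      rw [hFpos _ _ _ _ hpos, hFpos _ _ _ _ hpos]
      have := auxLog (p0 s a) (hp0 s a) (hp01 s a) (Vof Qa) (Vof Qb) M hab hpos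
      linarith
  -- the supremum over β is bounded above
  have hFbdd : ∀ (Q : S × A → ℝ) s a,
      BddAbove (Set.range fun β : {β : ℝ // 0 ≤ β} => F Q s a β) := by
    intro Q s a
    have hVbdd : BddAbove (Set.range (Vof Q)) := Set.Finite.bddAbove (Set.finite_range _)
    obtain ⟨C, hC⟩ := hVbdd
    refine ⟨C, ?_⟩
    rintro x ⟨⟨β, hβ⟩, rfl⟩
    simp only
    rcases eq_or_lt_of_le hβ with h0 | hpos
    · subst h0
      rw [hF0]
      obtain ⟨s', hs'⟩ := hsupp s a
      calc sInf {x | ∃ s', 0 < p0 s a s' ∧ x = Vof Q s'}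
          ≤ Vof Q s' := by
            refine csInf_le ?_ ⟨s', hs', rfl⟩
            refine (Set.finite_range (Vof Q)).subset ?_ |>.bddBelow
            rintro x ⟨t, _, rfl⟩
            exact ⟨t, rfl⟩
        _ ≤ C := hC ⟨s', rfl⟩
    · rw [hFpos _ _ _ _ hpos]
      have hsum : Real.exp (-C / β) ≤ ∑ s', p0 s a s' * Real.exp (-(Vof Q s') / β) := by
        calc Real.exp (-C / β) = ∑ s', p0 s a s' * Real.exp (-C / β) := by
              rw [← Finset.sum_mul, hp01, one_mul]
          _ ≤ ∑ s', p0 s a s' * Real.exp (-(Vof Q s') / β) := by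
              refine Finset.sum_le_sum fun s' _ => ?_
              refine mul_le_mul_of_nonneg_left ?_ (hp0 s a s')
              apply Real.exp_le_exp.2
              have : Vof Q s' ≤ C := hC ⟨s', rfl⟩
              have h2 : -C ≤ -(Vof Q s') := by linarith
              gcongr
      have hlog : -C / β ≤ Real.log (∑ s', p0 s a s' * Real.exp (-(Vof Q s') / β)) := by
        calc -C / β = Real.log (Real.exp (-C / β)) := (Real.log_exp _).symm
          _ ≤ _ := Real.log_le_log (Real.exp_pos _) hsum
      have hmul : β * (-C / β) ≤ β * Real.log (∑ s', p0 s a s' * Real.exp (-(Vof Q s') / β)) :=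
        mul_le_mul_of_nonneg_left hlog hpos.le
      rw [mul_div_cancel₀ _ hpos.ne'] at hmul
      nlinarith [mul_pos hpos hδ]
  -- the suprema are within M of each other
  have hsupdiff : ∀ s a, |(⨆ β : {β : ℝ // 0 ≤ β}, F Q1 s a β) -
      (⨆ β : {β : ℝ // 0 ≤ β}, F Q2 s a β)| ≤ M := by
    intro s a
    rw [abs_sub_le_iff]
    constructor
    · rw [sub_le_iff_le_add, add_comm]
      refine ciSup_le fun β => ?_
      calc F Q1 s a β ≤ F Q2 s a β + M := key Q1 Q2 hV12 s a β β.2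
        _ ≤ (⨆ β : {β : ℝ // 0 ≤ β}, F Q2 s a β) + M := by
            have := le_ciSup (hFbdd Q2 s a) β
            linarith
    · rw [sub_le_iff_le_add, add_comm]
      refine ciSup_le fun β => ?_
      calc F Q2 s a β ≤ F Q1 s a β + M := key Q2 Q1 hV21 s a β β.2
        _ ≤ (⨆ β : {β : ℝ // 0 ≤ β}, F Q1 s a β) + M := by
            have := le_ciSup (hFbdd Q1 s a) β
            linarith
  refine ciSup_le fun sa => ?_
  obtain ⟨s, a⟩ := sa
  rw [hT, hT]
  have heq : r s a + γ * (⨆ β : {β : ℝ // 0 ≤ β}, F Q1 s a β) -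
      (r s a + γ * (⨆ β : {β : ℝ // 0 ≤ β}, F Q2 s a β)) =
      γ * ((⨆ β : {β : ℝ // 0 ≤ β}, F Q1 s a β) -
        (⨆ β : {β : ℝ // 0 ≤ β}, F Q2 s a β)) := by ring
  rw [heq, abs_mul, abs_of_nonneg hγ0]
  exact mul_le_mul_of_nonneg_left (hsupdiff s a) hγ0
end

section
/- Under the distributionally robust soft policy improvement update π_{k+1} = argmin_{π'} D_KL( π'(·|s) ‖ exp(Q^{π_k}(s,·)/α)/Z(s) ), the robust soft Q-function is monotonically improved: Q^{π_{k+1}}_{M_δ}(s,a) ≥ Q^{π_k}_{M_δ}(s,a) for all (s,a), where Q^π_{M_δ} is the fixed point of the distributionally robust soft Bellman operator T_δ^π. -/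
open Real

/-!
If `Q'` is a fixed point of a map `F` that is monotone and shifts constants by a factor `γ < 1`,
then `Q ≤ F Q` forces `Q ≤ Q'`: with `c = max (Q - Q')` one gets `c ≤ γ c`, so `c ≤ 0`.
The robust soft Bellman operator is such a map, since the soft value is monotone in `Q` and an
infimum of expectations over probability vectors commutes with adding constants. The
hypothesis `Q^{π_k} ≤ T^{π_{k+1}} Q^{π_k}` comes from the Gibbs identity
`KL(π ‖ softmax(q/α)) = log Z - V_π(q)/α`, so the KL-improvement of `π_{k+1}` says exactly that
its soft value against `Q^{π_k}` is at least that of `π_k`.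
-/

theorem le_of_le_map_of_isFixedPt {X : Type*} [Finite X] {F : (X → ℝ) → X → ℝ} {γ : ℝ}
    (hγ : γ < 1) (hF : ∀ Q Q' c, (∀ x, Q x ≤ Q' x + c) → ∀ x, F Q x ≤ F Q' x + γ * c)
    {Q Q' : X → ℝ} (hQ : ∀ x, Q x ≤ F Q x) (hQ' : Function.IsFixedPt F Q') :
    ∀ x, Q x ≤ Q' x := by
  intro x
  have : Nonempty X := ⟨x⟩
  obtain ⟨x₀, hx₀⟩ := Finite.exists_max fun y => Q y - Q' y
  have hshift : ∀ y, Q y ≤ Q' y + (Q x₀ - Q' x₀) := fun y => by linarith [hx₀ y]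
  have hcontract : Q x₀ ≤ Q' x₀ + γ * (Q x₀ - Q' x₀) :=
    calc Q x₀ ≤ F Q x₀ := hQ x₀
      _ ≤ F Q' x₀ + γ * (Q x₀ - Q' x₀) := hF Q Q' _ hshift x₀
      _ = Q' x₀ + γ * (Q x₀ - Q' x₀) := by rw [hQ']
  have hc : Q x₀ - Q' x₀ ≤ 0 := by nlinarith
  linarith [hshift x]

section ProbabilityVector

variable {ι : Type*} [Fintype ι]

theorem sum_mul_le_sum_mul_add {p g g' : ι → ℝ} {c : ℝ} (hp : ∀ i, 0 ≤ p i)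
    (hp1 : ∑ i, p i = 1) (hg : ∀ i, g i ≤ g' i + c) :
    ∑ i, p i * g i ≤ ∑ i, p i * g' i + c :=
  calc ∑ i, p i * g i ≤ ∑ i, p i * (g' i + c) :=
        Finset.sum_le_sum fun i _ => mul_le_mul_of_nonneg_left (hg i) (hp i)
    _ = ∑ i, p i * g' i + c := by
        simp only [mul_add, Finset.sum_add_distrib, ← Finset.sum_mul, hp1, one_mul]

theorem csInf_image_sum_mul_le_add {D : Set (ι → ℝ)} (hD : D.Nonempty)
    (hprob : ∀ p ∈ D, (∀ i, 0 ≤ p i) ∧ ∑ i, p i = 1) {g g' : ι → ℝ} {c : ℝ}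
    (hg : ∀ i, g i ≤ g' i + c) :
    sInf ((fun p => ∑ i, p i * g i) '' D) ≤ sInf ((fun p => ∑ i, p i * g' i) '' D) + c := by
  have hbdd : BddBelow ((fun p => ∑ i, p i * g i) '' D) := by
    refine ⟨-∑ i, |g i|, ?_⟩
    rintro _ ⟨p, hp, rfl⟩
    have hg0 : ∀ i, (0 : ℝ) ≤ g i + ∑ j, |g j| := fun i => by
      linarith [neg_abs_le (g i), Finset.single_le_sum (fun j _ => abs_nonneg (g j))
        (Finset.mem_univ i)]
    have hlow := sum_mul_le_sum_mul_add (hprob p hp).1 (hprob p hp).2 hg0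
    simp only [mul_zero, Finset.sum_const_zero] at hlow
    linarith
  rw [← sub_le_iff_le_add]
  refine le_csInf (hD.image _) ?_
  rintro _ ⟨p, hp, rfl⟩
  linarith [csInf_le hbdd ⟨p, hp, rfl⟩, sum_mul_le_sum_mul_add (hprob p hp).1 (hprob p hp).2 hg]

end ProbabilityVector

section SoftValue

variable {A : Type*} [Fintype A]

noncomputable def softValue (α : ℝ) (ρ q : A → ℝ) : ℝ :=
  ∑ a, ρ a * (q a - α * log (ρ a))

theorem softValue_le_add {α c : ℝ} {ρ q q' : A → ℝ} (hρ : ∀ a, 0 ≤ ρ a)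
    (hρ1 : ∑ a, ρ a = 1) (hq : ∀ a, q a ≤ q' a + c) :
    softValue α ρ q ≤ softValue α ρ q' + c :=
  sum_mul_le_sum_mul_add hρ hρ1 fun a => by linarith [hq a]

theorem sum_mul_log_div_softmax [Nonempty A] {α : ℝ} (hα : α ≠ 0) {ρ : A → ℝ}
    (hρ : ∀ a, 0 < ρ a) (hρ1 : ∑ a, ρ a = 1) (q : A → ℝ) :
    ∑ a, ρ a * log (ρ a / (exp (q a / α) / ∑ b, exp (q b / α))) =
      log (∑ b, exp (q b / α)) - softValue α ρ q / α := by
  have hZ : 0 < ∑ b, exp (q b / α) :=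
    Finset.sum_pos (fun b _ => exp_pos _) Finset.univ_nonempty
  have hterm : ∀ a, ρ a * log (ρ a / (exp (q a / α) / ∑ b, exp (q b / α))) =
      ρ a * log (∑ b, exp (q b / α)) - ρ a * (q a - α * log (ρ a)) / α := fun a => by
    rw [log_div (hρ a).ne' (div_pos (exp_pos _) hZ).ne', log_div (exp_pos _).ne' hZ.ne',
      log_exp]
    field_simp
    ring
  simp only [hterm, Finset.sum_sub_distrib, ← Finset.sum_mul, ← Finset.sum_div, hρ1, one_mul,
    softValue]

theorem softValue_le_of_klDiv_softmax_le [Nonempty A] {α : ℝ} (hα : 0 < α) {ρ ρ' q : A → ℝ}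
    (hρ : ∀ a, 0 < ρ a) (hρ1 : ∑ a, ρ a = 1) (hρ' : ∀ a, 0 < ρ' a) (hρ'1 : ∑ a, ρ' a = 1)
    (hkl : ∑ a, ρ' a * log (ρ' a / (exp (q a / α) / ∑ b, exp (q b / α))) ≤
      ∑ a, ρ a * log (ρ a / (exp (q a / α) / ∑ b, exp (q b / α)))) :
    softValue α ρ q ≤ softValue α ρ' q := by
  rw [sum_mul_log_div_softmax hα.ne' hρ hρ1, sum_mul_log_div_softmax hα.ne' hρ' hρ'1] at hkl
  exact (div_le_div_iff_of_pos_right hα).mp (by linarith)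

end SoftValue

section RobustBellman

variable {S A : Type*} [Fintype S] [Fintype A]

def klBall (q : S → ℝ) (δ : ℝ) : Set (S → ℝ) :=
  {p | (∀ s, 0 ≤ p s) ∧ ∑ s, p s = 1 ∧ (∀ s, q s = 0 → p s = 0) ∧
    ∑ s, p s * log (p s / q s) ≤ δ}

theorem self_mem_klBall {q : S → ℝ} {δ : ℝ} (hq : ∀ s, 0 ≤ q s) (hq1 : ∑ s, q s = 1)
    (hδ : 0 ≤ δ) : q ∈ klBall q δ := by
  refine ⟨hq, hq1, fun _ h => h, ?_⟩
  have hzero : ∀ s, q s * log (q s / q s) = 0 := fun s => by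
    rcases (hq s).eq_or_lt with h | h
    · rw [← h, zero_mul]
    · rw [div_self h.ne', log_one, mul_zero]
  simpa only [hzero, Finset.sum_const_zero] using hδ

theorem image_klBall (q : S → ℝ) (δ : ℝ) (f : (S → ℝ) → ℝ) :
    f '' klBall q δ = {x | ∃ p : S → ℝ, (∀ s, 0 ≤ p s) ∧ (∑ s, p s = 1) ∧
      (∀ s, q s = 0 → p s = 0) ∧ (∑ s, p s * log (p s / q s)) ≤ δ ∧ x = f p} := by
  ext x
  simp only [Set.mem_image, klBall, Set.mem_ofPred_eq, and_assoc, eq_comm]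

noncomputable def robustBellman (p0 : S → A → S → ℝ) (r : S → A → ℝ) (δ α γ : ℝ)
    (pol : S → A → ℝ) (Q : S × A → ℝ) (sa : S × A) : ℝ :=
  r sa.1 sa.2 + γ * sInf ((fun p => ∑ s', p s' * softValue α (pol s') fun a' => Q (s', a')) ''
    klBall (p0 sa.1 sa.2) δ)

variable {p0 : S → A → S → ℝ} {r : S → A → ℝ} {δ α γ : ℝ}

theorem robustBellman_le_add (hp0 : ∀ s a s', 0 ≤ p0 s a s') (hp01 : ∀ s a, ∑ s', p0 s a s' = 1)
    (hδ : 0 ≤ δ) (hγ : 0 ≤ γ) {pol pol' : S → A → ℝ} {Q Q' : S × A → ℝ} {c : ℝ}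
    (h : ∀ s', softValue α (pol s') (fun a' => Q (s', a')) ≤
      softValue α (pol' s') (fun a' => Q' (s', a')) + c) (sa : S × A) :
    robustBellman p0 r δ α γ pol Q sa ≤ robustBellman p0 r δ α γ pol' Q' sa + γ * c := by
  have hinf := csInf_image_sum_mul_le_add
    ⟨_, self_mem_klBall (hp0 sa.1 sa.2) (hp01 sa.1 sa.2) hδ⟩ (fun p hp => ⟨hp.1, hp.2.1⟩) h
  simp only [robustBellman]
  linarith [mul_le_mul_of_nonneg_left hinf hγ]

theorem robustBellman_le_add_of_le_add (hp0 : ∀ s a s', 0 ≤ p0 s a s')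
    (hp01 : ∀ s a, ∑ s', p0 s a s' = 1) (hδ : 0 ≤ δ) (hγ : 0 ≤ γ) {pol : S → A → ℝ}
    (hpol : ∀ s a, 0 ≤ pol s a) (hpol1 : ∀ s, ∑ a, pol s a = 1) {Q Q' : S × A → ℝ} {c : ℝ}
    (hQ : ∀ sa, Q sa ≤ Q' sa + c) (sa : S × A) :
    robustBellman p0 r δ α γ pol Q sa ≤ robustBellman p0 r δ α γ pol Q' sa + γ * c :=
  robustBellman_le_add hp0 hp01 hδ hγ
    (fun s' => softValue_le_add (hpol s') (hpol1 s') fun a' => hQ (s', a')) sa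

end RobustBellman

theorem stmt5_general {S A : Type*} [Fintype S] [Fintype A]
    (p0 : S → A → S → ℝ) (hp0 : ∀ s a s', 0 ≤ p0 s a s')
    (hp01 : ∀ s a, ∑ s', p0 s a s' = 1)
    (r : S → A → ℝ) (δ α γ : ℝ) (hδ : 0 < δ) (hα : 0 < α)
    (hγ0 : 0 ≤ γ) (hγ1 : γ < 1)
    -- the primal distributionally robust soft Bellman operator, for each policy
    (T : (S → A → ℝ) → (S × A → ℝ) → S × A → ℝ)
    (hT : ∀ (pol : S → A → ℝ) (Q : S × A → ℝ) (s : S) (a : A),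
      T pol Q (s, a) = r s a + γ *
        sInf {x | ∃ p : S → ℝ, (∀ s', 0 ≤ p s') ∧ (∑ s', p s' = 1) ∧
          (∀ s', p0 s a s' = 0 → p s' = 0) ∧
          (∑ s', p s' * Real.log (p s' / p0 s a s')) ≤ δ ∧
          x = ∑ s', p s' * ∑ a', pol s' a' *
            (Q (s', a') - α * Real.log (pol s' a'))})
    -- the two policies, fully supported
    (polk polk1 : S → A → ℝ)
    (hk : ∀ s a, 0 < polk s a) (hk1sum : ∀ s, ∑ a, polk s a = 1)
    (hk1 : ∀ s a, 0 < polk1 s a) (hk1sum' : ∀ s, ∑ a, polk1 s a = 1)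
    -- robust soft Q-functions: fixed points of the respective operators
    (Qk Qk1 : S × A → ℝ)
    (hQk : T polk Qk = Qk) (hQk1 : T polk1 Qk1 = Qk1)
    -- normalizing constant
    (Z : S → ℝ) (hZ : ∀ s, Z s = ∑ a, Real.exp (Qk (s, a) / α))
    -- the KL-projection improvement condition
    (himp : ∀ s,
      (∑ a, polk1 s a * Real.log (polk1 s a / (Real.exp (Qk (s, a) / α) / Z s)))
        ≤ ∑ a, polk s a * Real.log (polk s a / (Real.exp (Qk (s, a) / α) / Z s))) :
    ∀ s a, Qk (s, a) ≤ Qk1 (s, a) := by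
  intro s a
  have : Nonempty A := ⟨a⟩
  obtain rfl : T = robustBellman p0 r δ α γ := by
    funext pol Q ⟨s', a'⟩
    rw [hT, ← image_klBall]
    rfl
  have himprove : ∀ s', softValue α (polk s') (fun a' => Qk (s', a')) ≤
      softValue α (polk1 s') (fun a' => Qk (s', a')) := fun s' =>
    softValue_le_of_klDiv_softmax_le hα (hk s') (hk1sum s') (hk1 s') (hk1sum' s')
      (by simpa only [hZ] using himp s')
  have hQk_le : ∀ sa, Qk sa ≤ robustBellman p0 r δ α γ polk1 Qk sa := fun sa => by
    have hstep := robustBellman_le_add hp0 hp01 hδ.le hγ0 (r := r) (c := 0)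
      (fun s' => (himprove s').trans_eq (add_zero _).symm) sa
    rwa [hQk, mul_zero, add_zero] at hstep
  exact le_of_le_map_of_isFixedPt hγ1
    (fun _ _ _ h => robustBellman_le_add_of_le_add hp0 hp01 hδ.le hγ0
      (fun s a => (hk1 s a).le) hk1sum' h) hQk_le hQk1 (s, a)

/-- Distributionally robust soft policy improvement. If `π_{k+1}`
(weakly) improves on `π_k` in the KL-projection objective built from the robust
soft Q-function `Q^{π_k}`, then `Q^{π_{k+1}} ≥ Q^{π_k}` pointwise, where `Q^π`
denotes the fixed point of the distributionally robust soft Bellman operator. -/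
theorem stmt5 {S A : Type*} [Fintype S] [Fintype A] [Nonempty S] [Nonempty A]
    (p0 : S → A → S → ℝ) (hp0 : ∀ s a s', 0 ≤ p0 s a s')
    (hp01 : ∀ s a, ∑ s', p0 s a s' = 1)
    (r : S → A → ℝ) (δ α γ : ℝ) (hδ : 0 < δ) (hα : 0 < α)
    (hγ0 : 0 ≤ γ) (hγ1 : γ < 1)
    -- the primal distributionally robust soft Bellman operator, for each policy
    (T : (S → A → ℝ) → (S × A → ℝ) → S × A → ℝ)
    (hT : ∀ (pol : S → A → ℝ) (Q : S × A → ℝ) (s : S) (a : A),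
      T pol Q (s, a) = r s a + γ *
        sInf {x | ∃ p : S → ℝ, (∀ s', 0 ≤ p s') ∧ (∑ s', p s' = 1) ∧
          (∀ s', p0 s a s' = 0 → p s' = 0) ∧
          (∑ s', p s' * Real.log (p s' / p0 s a s')) ≤ δ ∧
          x = ∑ s', p s' * ∑ a', pol s' a' *
            (Q (s', a') - α * Real.log (pol s' a'))})
    -- the two policies, fully supported
    (polk polk1 : S → A → ℝ)
    (hk : ∀ s a, 0 < polk s a) (hk1sum : ∀ s, ∑ a, polk s a = 1)
    (hk1 : ∀ s a, 0 < polk1 s a) (hk1sum' : ∀ s, ∑ a, polk1 s a = 1)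
    -- robust soft Q-functions: fixed points of the respective operators
    (Qk Qk1 : S × A → ℝ)
    (hQk : T polk Qk = Qk) (hQk1 : T polk1 Qk1 = Qk1)
    -- normalizing constant
    (Z : S → ℝ) (hZ : ∀ s, Z s = ∑ a, Real.exp (Qk (s, a) / α))
    -- the KL-projection improvement condition
    (himp : ∀ s,
      (∑ a, polk1 s a * Real.log (polk1 s a / (Real.exp (Qk (s, a) / α) / Z s)))
        ≤ ∑ a, polk s a * Real.log (polk s a / (Real.exp (Qk (s, a) / α) / Z s))) :
    ∀ s a, Qk (s, a) ≤ Qk1 (s, a) :=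
  stmt5_general p0 hp0 hp01 r δ α γ hδ hα hγ0 hγ1 T hT polk polk1 hk hk1sum hk1 hk1sum' Qk Qk1 hQk
    hQk1 Z hZ himp
end

section
/- Boundedness of the dual optimizer: let f((s,a), β) = -β log( E_{p⁰_{s,a}}[exp(-V(s')/β)] ) - βδ where 0 ≤ V(s) ≤ V_max := (R_max + α log|A|)/(1-γ). Then sup_{β≥0} f((s,a), β) ≥ 0, and for any β > V_max/(δ) we have f((s,a), β) < 0; hence any maximizer β* lies in the interval [0, V_max/δ]. -/
open Real

/-- Boundedness of the dual optimizer: the supremum of the dual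
objective `f` over `β ≥ 0` is nonnegative, `f β < 0` whenever `β > V_max/δ`,
and hence any maximizer lies in `[0, V_max/δ]`. -/
theorem stmt7 {S : Type*} [Fintype S] [Nonempty S]
    (p : S → ℝ) (hp : ∀ s, 0 ≤ p s) (hp1 : ∑ s, p s = 1)
    (δ Rmax α γ : ℝ) (hδ : 0 < δ) (hR : 0 < Rmax) (hα : 0 ≤ α)
    (hγ0 : 0 ≤ γ) (hγ1 : γ < 1)
    (Acard : ℕ) (hA : 1 ≤ Acard)
    (Vmax : ℝ) (hVmax : Vmax = (Rmax + α * Real.log Acard) / (1 - γ))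
    (V : S → ℝ) (hV : ∀ s, V s ∈ Set.Icc 0 Vmax)
    (f : ℝ → ℝ)
    (hf0 : f 0 = sInf {x | ∃ s, 0 < p s ∧ x = V s})
    (hfpos : ∀ β > (0 : ℝ),
      f β = -β * Real.log (∑ s, p s * Real.exp (-V s / β)) - β * δ) :
    0 ≤ sSup (f '' Set.Ici 0) ∧
    (∀ β > Vmax / δ, f β < 0) ∧
    (∀ βs : ℝ, 0 ≤ βs → (∀ β ≥ (0 : ℝ), f β ≤ f βs) →
      βs ∈ Set.Icc 0 (Vmax / δ)) := by
  have hγ : 0 < 1 - γ := by linarith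
  have hlogA : 0 ≤ Real.log Acard := by
    apply Real.log_nonneg
    exact_mod_cast hA
  have hVpos : 0 < Vmax := by
    rw [hVmax]
    apply div_pos _ hγ
    nlinarith
  -- the key bound: for β > 0, f β ≤ Vmax - β * δ
  have key : ∀ β : ℝ, 0 < β → f β ≤ Vmax - β * δ := by
    intro β hβ
    rw [hfpos β hβ]
    have hsum : Real.exp (-Vmax / β) ≤ ∑ s, p s * Real.exp (-V s / β) := by
      have h1 : Real.exp (-Vmax / β) = ∑ s, p s * Real.exp (-Vmax / β) := by
        rw [← Finset.sum_mul, hp1, one_mul]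
      rw [h1]
      apply Finset.sum_le_sum
      intro s _
      apply mul_le_mul_of_nonneg_left _ (hp s)
      apply Real.exp_le_exp.mpr
      apply (div_le_div_iff_of_pos_right hβ).mpr
      linarith [(hV s).2]
    have hlog : -Vmax / β ≤ Real.log (∑ s, p s * Real.exp (-V s / β)) := by
      have := Real.log_le_log (Real.exp_pos (-Vmax / β)) hsum
      rwa [Real.log_exp] at this
    have h2 : β * (-Vmax / β) = -Vmax := by field_simp
    nlinarith [mul_le_mul_of_nonneg_left hlog (le_of_lt hβ)]
  -- nonempty support set
  obtain ⟨s₀, hs₀⟩ : ∃ s, 0 < p s := by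
    by_contra h
    push_neg at h
    have : ∑ s, p s = 0 := Finset.sum_eq_zero fun s _ => le_antisymm (h s) (hp s)
    rw [hp1] at this; norm_num at this
  have hne : ({x | ∃ s, 0 < p s ∧ x = V s} : Set ℝ).Nonempty := ⟨V s₀, s₀, hs₀, rfl⟩
  have hbdd : ∀ x ∈ {x | ∃ s, 0 < p s ∧ x = V s}, (0:ℝ) ≤ x := by
    rintro x ⟨s, _, rfl⟩; exact (hV s).1
  have hf0nn : 0 ≤ f 0 := by
    rw [hf0]; exact le_csInf hne hbdd
  have hf0le : f 0 ≤ Vmax := by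
    rw [hf0]
    exact le_trans (csInf_le ⟨0, hbdd⟩ ⟨s₀, hs₀, rfl⟩) (hV s₀).2
  -- f bounded above by Vmax on Ici 0
  have hub : ∀ x ∈ f '' Set.Ici 0, x ≤ Vmax := by
    rintro x ⟨β, hβ, rfl⟩
    rcases eq_or_lt_of_le (Set.mem_Ici.mp hβ : (0:ℝ) ≤ β) with h | h
    · rw [← h]; exact hf0le
    · have := key β h
      nlinarith
  have part2 : ∀ β > Vmax / δ, f β < 0 := by
    intro β hβ
    have hβpos : 0 < β := lt_trans (div_pos hVpos hδ) hβ
    have := key β hβpos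
    have h3 : Vmax < β * δ := (div_lt_iff₀ hδ).mp hβ
    linarith
  refine ⟨?_, part2, ?_⟩
  · calc (0:ℝ) ≤ f 0 := hf0nn
      _ ≤ sSup (f '' Set.Ici 0) :=
        le_csSup ⟨Vmax, fun x hx => hub x hx⟩ ⟨0, Set.self_mem_Ici, rfl⟩
  · intro βs hβs hmax
    refine ⟨hβs, ?_⟩
    by_contra h
    push_neg at h
    have := part2 βs h
    have := hmax 0 (le_refl 0)
    linarith
end

section
/- Interchange of supremization and expectation: let μ be a probability measure on a measurable space Ω, and let f : Ω × ℝ → ℝ be a normal integrand (measurable in ω for each β, continuous in β for each ω) such that for each ω the supremum sup_{β ∈ [0,B]} f(ω, β) is attained in the compact interval [0,B]. Then E_{ω~μ}[ sup_{β ∈ [0,B]} f(ω, β) ] = sup_{g ∈ G} E_{ω~μ}[ f(ω, g(ω)) ], where G is the set of measurable functions g : Ω → [0, B]. -/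
open MeasureTheory

/-- Interchange of supremization and expectation: for a normal
integrand `f` whose inner supremum over the compact interval `[0, B]` is
attained, the integral of the pointwise supremum equals the supremum over
measurable selectors `g : Ω → [0, B]` of the integral of `f (ω, g ω)`. -/
theorem stmt9 {Ω : Type*} [MeasurableSpace Ω] (μ : Measure Ω) [IsProbabilityMeasure μ]
    (B : ℝ) (hB : 0 < B)
    (f : Ω × ℝ → ℝ) (hmeas : Measurable f)
    (hcont : ∀ ω, Continuous fun β => f (ω, β))
    (hatt : ∀ ω, ∃ β ∈ Set.Icc (0 : ℝ) B,
      ∀ β' ∈ Set.Icc (0 : ℝ) B, f (ω, β') ≤ f (ω, β))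
    (hint : Integrable (fun ω => ⨆ β : Set.Icc (0 : ℝ) B, f (ω, β)) μ)
    (hint' : ∀ g : Ω → ℝ, Measurable g → (∀ ω, g ω ∈ Set.Icc (0 : ℝ) B) →
      Integrable (fun ω => f (ω, g ω)) μ) :
    (∫ ω, (⨆ β : Set.Icc (0 : ℝ) B, f (ω, β)) ∂μ)
      = sSup {x | ∃ g : Ω → ℝ, Measurable g ∧ (∀ ω, g ω ∈ Set.Icc (0 : ℝ) B) ∧
          x = ∫ ω, f (ω, g ω) ∂μ} := by
  classical
  have hIcc : (Set.Icc (0:ℝ) B).Nonempty := ⟨0, le_refl 0, hB.le⟩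
  haveI : Nonempty (Set.Icc (0:ℝ) B) := hIcc.to_subtype
  choose b hb hmax using hatt
  set F : Ω → ℝ := fun ω => ⨆ β : Set.Icc (0 : ℝ) B, f (ω, β) with hFdef
  have hbdd : ∀ ω, BddAbove (Set.range fun β : Set.Icc (0:ℝ) B => f (ω, β)) :=
    fun ω => ⟨f (ω, b ω), by rintro x ⟨β, rfl⟩; exact hmax ω β β.2⟩
  have hF : ∀ ω, F ω = f (ω, b ω) := fun ω =>
    le_antisymm (ciSup_le fun β => hmax ω β β.2) (le_ciSup (hbdd ω) ⟨b ω, hb ω⟩)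
  set q : ℕ → Set.Icc (0:ℝ) B := TopologicalSpace.denseSeq _ with hq
  have hqd : DenseRange q := TopologicalSpace.denseRange_denseSeq _
  have hbddN : ∀ ω, BddAbove (Set.range fun n => f (ω, (q n : ℝ))) :=
    fun ω => ⟨f (ω, b ω), by rintro x ⟨n, rfl⟩; exact hmax ω _ (q n).2⟩
  have key : ∀ ω, ∀ ε > (0:ℝ), ∃ n, F ω - ε < f (ω, (q n : ℝ)) := by
    intro ω ε hε
    have hc : ContinuousAt (fun β => f (ω, β)) (b ω) := (hcont ω).continuousAt
    obtain ⟨δ, hδ, hδ'⟩ := Metric.continuousAt_iff.1 hc ε hε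
    obtain ⟨n, hn⟩ := Metric.denseRange_iff.1 hqd ⟨b ω, hb ω⟩ δ hδ
    refine ⟨n, ?_⟩
    have hd : dist ((q n : ℝ)) (b ω) < δ := by
      have := hn
      rw [Subtype.dist_eq] at this
      simpa [dist_comm] using this
    have h2 := hδ' hd
    rw [Real.dist_eq] at h2
    have h3 := (abs_lt.1 h2).1
    rw [hF ω]
    linarith
  have hmeasn : ∀ n : ℕ, Measurable fun ω => f (ω, (q n : ℝ)) :=
    fun n => hmeas.comp (measurable_id.prodMk measurable_const)
  have hFN : ∀ ω, F ω = ⨆ n, f (ω, (q n : ℝ)) := by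
    intro ω
    refine le_antisymm ?_ (ciSup_le fun n => by rw [hF ω]; exact hmax ω _ (q n).2)
    refine le_of_forall_pos_le_add fun ε hε => ?_
    obtain ⟨n, hn⟩ := key ω ε hε
    have := le_ciSup (hbddN ω) n
    linarith
  have hFmeas : Measurable F := by
    rw [show F = fun ω => ⨆ n, f (ω, (q n : ℝ)) from funext hFN]
    exact Measurable.iSup hmeasn
  set S := {x | ∃ g : Ω → ℝ, Measurable g ∧ (∀ ω, g ω ∈ Set.Icc (0 : ℝ) B) ∧
      x = ∫ ω, f (ω, g ω) ∂μ} with hS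
  have hub : ∀ x ∈ S, x ≤ ∫ ω, F ω ∂μ := by
    rintro x ⟨g, hg, hgm, rfl⟩
    refine integral_mono (hint' g hg hgm) hint fun ω => ?_
    rw [hF ω]; exact hmax ω _ (hgm ω)
  have hne : S.Nonempty :=
    ⟨∫ ω, f (ω, (0:ℝ)) ∂μ, fun _ => 0, measurable_const,
      fun ω => ⟨le_refl 0, hB.le⟩, rfl⟩
  refine le_antisymm ?_ (csSup_le hne hub)
  refine le_of_forall_pos_le_add fun ε hε => ?_
  have hex : ∀ ω, ∃ n, F ω - ε < f (ω, (q n : ℝ)) := fun ω => key ω ε hε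
  have hsets : ∀ n : ℕ, MeasurableSet {ω | F ω - ε < f (ω, (q n : ℝ))} :=
    fun n => measurableSet_lt (hFmeas.sub measurable_const) (hmeasn n)
  have hN : Measurable fun ω => Nat.find (hex ω) := measurable_find hex hsets
  set g : Ω → ℝ := fun ω => (q (Nat.find (hex ω)) : ℝ) with hgdef
  have hgm : Measurable g :=
    (measurable_from_top (f := fun n : ℕ => ((q n : ℝ)))).comp hN
  have hgmem : ∀ ω, g ω ∈ Set.Icc (0:ℝ) B := fun ω => (q _).2
  have hgi := hint' g hgm hgmem
  have hlow : ∀ ω, F ω - ε ≤ f (ω, g ω) := fun ω => (Nat.find_spec (hex ω)).le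
  have h1 : ∫ ω, F ω ∂μ - ε ≤ ∫ ω, f (ω, g ω) ∂μ := by
    have h0 := integral_mono (hint.sub (integrable_const ε)) hgi hlow
    simp only [Pi.sub_apply] at h0
    rw [integral_sub hint (integrable_const ε), integral_const, probReal_univ] at h0
    simpa using h0
  have h2 : (∫ ω, f (ω, g ω) ∂μ) ∈ S := ⟨g, hgm, hgmem, rfl⟩
  have h3 := le_csSup ⟨∫ ω, F ω ∂μ, hub⟩ h2
  linarith
end

section
/- Let p, p̂ be probability distributions on a finite set S with TV(p, p̂) ≤ ε₁/2, let V : S → [0, V_max], and let β ≥ β_ > 0. Then | E_{p̂}[e^{-V(s')/β}] - E_p[e^{-V(s')/β}] | ≤ ε₁, and consequently, for β ∈ [β_, V_max/δ], the dual objectives f(β) = -β log(E_p[e^{-V/β}]) - βδ and f̂(β) = -β log(E_{p̂}[e^{-V/β}]) - βδ satisfy |f̂(β) - f(β)| ≤ ε₁ · (V_max/δ) · e^{V_max/β_}. -/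
/-!
The weights `e^{-V/β}` lie in `[e^{-V_max/β_}, 1]`. Bounded by `1`, they move the expectation
by at most the `ℓ¹` distance `2 TV(p, p̂) ≤ ε₁`; bounded below, they keep both expectations in
`[e^{-V_max/β_}, 1]`, where `log` is `e^{V_max/β_}`-Lipschitz, and `β ≤ V_max/δ` does the
rest.
-/

open Real

lemma Real.log_sub_log_le_abs_sub_div {a b c : ℝ} (ha : 0 < a) (hc : 0 < c) (hb : c ≤ b) :
    log a - log b ≤ |a - b| / c := by
  have hb₀ : 0 < b := hc.trans_le hb
  calc log a - log b = log (a / b) := (log_div ha.ne' hb₀.ne').symm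
    _ ≤ a / b - 1 := log_le_sub_one_of_pos (div_pos ha hb₀)
    _ = (a - b) / b := by field_simp
    _ ≤ |a - b| / b := by gcongr; exact le_abs_self _
    _ ≤ |a - b| / c := by gcongr

lemma Real.abs_log_sub_log_le_abs_sub_div {a b c : ℝ} (hc : 0 < c) (ha : c ≤ a) (hb : c ≤ b) :
    |log a - log b| ≤ |a - b| / c := by
  refine abs_sub_le_iff.mpr ⟨log_sub_log_le_abs_sub_div (hc.trans_le ha) hc hb, ?_⟩
  rw [abs_sub_comm]
  exact log_sub_log_le_abs_sub_div (hc.trans_le hb) hc ha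

lemma abs_sum_mul_sub_sum_mul_le_sum_abs_sub {S : Type*} [Fintype S] (p q f : S → ℝ)
    (hf : ∀ s, |f s| ≤ 1) :
    |∑ s, q s * f s - ∑ s, p s * f s| ≤ ∑ s, |p s - q s| := by
  rw [← Finset.sum_sub_distrib]
  refine (Finset.abs_sum_le_sum_abs _ _).trans (Finset.sum_le_sum fun s _ => ?_)
  rw [← sub_mul, abs_mul, abs_sub_comm]
  exact mul_le_of_le_one_right (abs_nonneg _) (hf s)

lemma le_sum_mul_of_forall_le {S : Type*} [Fintype S] {q f : S → ℝ} {c : ℝ}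
    (hq : ∀ s, 0 ≤ q s) (hq1 : ∑ s, q s = 1) (hf : ∀ s, c ≤ f s) :
    c ≤ ∑ s, q s * f s :=
  calc c = ∑ s, q s * c := by rw [← Finset.sum_mul, hq1, one_mul]
    _ ≤ ∑ s, q s * f s := Finset.sum_le_sum fun s _ => mul_le_mul_of_nonneg_left (hf s) (hq s)

lemma Real.exp_neg_div_mem_Icc {v Vmax β βlow : ℝ} (hv : v ∈ Set.Icc 0 Vmax)
    (hβlow : 0 < βlow) (hβ : βlow ≤ β) :
    exp (-v / β) ∈ Set.Icc (exp (-(Vmax / βlow))) 1 := by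
  have hβ₀ : 0 < β := hβlow.trans_le hβ
  refine ⟨exp_le_exp.mpr ?_, exp_le_one_iff.mpr (div_nonpos_of_nonpos_of_nonneg
    (neg_nonpos.mpr hv.1) hβ₀.le)⟩
  rw [neg_div, neg_le_neg_iff]
  calc v / β ≤ v / βlow := div_le_div_of_nonneg_left hv.1 hβlow hβ
    _ ≤ Vmax / βlow := by gcongr; exact hv.2

theorem stmt11_general {S : Type*} [Fintype S]
    (p phat : S → ℝ)
    (hp : ∀ s, 0 ≤ p s) (hp1 : ∑ s, p s = 1)
    (hphat : ∀ s, 0 ≤ phat s) (hphat1 : ∑ s, phat s = 1)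
    (ε1 Vmax δ βlow : ℝ)
    (hβlow : 0 < βlow)
    (hTV : (1 / 2) * (∑ s, |p s - phat s|) ≤ ε1 / 2)
    (V : S → ℝ) (hV : ∀ s, V s ∈ Set.Icc 0 Vmax)
    (β : ℝ) (hβ : β ∈ Set.Icc βlow (Vmax / δ)) :
    |(∑ s, phat s * Real.exp (-V s / β)) - ∑ s, p s * Real.exp (-V s / β)| ≤ ε1 ∧
    |(-β * Real.log (∑ s, phat s * Real.exp (-V s / β)) - β * δ) -
        (-β * Real.log (∑ s, p s * Real.exp (-V s / β)) - β * δ)|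
      ≤ ε1 * (Vmax / δ) * Real.exp (Vmax / βlow) := by
  obtain ⟨hβ₁, hβ₂⟩ := hβ
  have hw s := exp_neg_div_mem_Icc (hV s) hβlow hβ₁
  have hL1 : ∑ s, |p s - phat s| ≤ ε1 := by linarith
  have hmoment := (abs_sum_mul_sub_sum_mul_le_sum_abs_sub p phat (fun s => exp (-V s / β))
    fun s => (abs_of_pos (exp_pos _)).trans_le (hw s).2).trans hL1
  refine ⟨hmoment, ?_⟩
  have hlog := abs_log_sub_log_le_abs_sub_div (exp_pos _)
    (le_sum_mul_of_forall_le hphat hphat1 fun s => (hw s).1)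
    (le_sum_mul_of_forall_le hp hp1 fun s => (hw s).1)
  have hVδ : 0 ≤ Vmax / δ := hβlow.le.trans (hβ₁.trans hβ₂)
  calc _ = |β| * |log (∑ s, phat s * exp (-V s / β)) - log (∑ s, p s * exp (-V s / β))| := by
        rw [← abs_mul, ← abs_neg]; congr 1; ring
    _ ≤ Vmax / δ * (ε1 / exp (-(Vmax / βlow))) := by
        refine mul_le_mul ((abs_of_pos (hβlow.trans_le hβ₁)).trans_le hβ₂) (hlog.trans ?_)
          (abs_nonneg _) hVδ
        gcongr
    _ = ε1 * (Vmax / δ) * exp (Vmax / βlow) := by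
        rw [div_eq_mul_inv ε1, ← exp_neg, neg_neg]; ring

/-- If `TV(p, p̂) ≤ ε₁/2` then the exponential moments differ by at
most `ε₁`, and on `[β_, V_max/δ]` the dual objectives differ by at most
`ε₁ (V_max/δ) e^{V_max/β_}`. -/
theorem stmt11 {S : Type*} [Fintype S] [Nonempty S]
    (p phat : S → ℝ)
    (hp : ∀ s, 0 ≤ p s) (hp1 : ∑ s, p s = 1)
    (hphat : ∀ s, 0 ≤ phat s) (hphat1 : ∑ s, phat s = 1)
    (ε1 Vmax δ βlow : ℝ) (hε : 0 ≤ ε1) (hVmax : 0 < Vmax) (hδ : 0 < δ)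
    (hβlow : 0 < βlow) (hβlowle : βlow ≤ Vmax / δ)
    (hTV : (1 / 2) * (∑ s, |p s - phat s|) ≤ ε1 / 2)
    (V : S → ℝ) (hV : ∀ s, V s ∈ Set.Icc 0 Vmax)
    (β : ℝ) (hβ : β ∈ Set.Icc βlow (Vmax / δ)) :
    |(∑ s, phat s * Real.exp (-V s / β)) - ∑ s, p s * Real.exp (-V s / β)| ≤ ε1 ∧
    |(-β * Real.log (∑ s, phat s * Real.exp (-V s / β)) - β * δ) -
        (-β * Real.log (∑ s, p s * Real.exp (-V s / β)) - β * δ)|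
      ≤ ε1 * (Vmax / δ) * Real.exp (Vmax / βlow) :=
  stmt11_general p phat hp hp1 hphat hphat1 ε1 Vmax δ βlow hβlow hTV V hV β hβ
end
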